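/- For every dimension d ≥ 2 there exist a d-copula C, a permutation π ∈ S_d, and a point u* ∈ [0,1]^d such that |C(u*) − C(u*_π)| = (d−1)/(d+1). Hence the bound (d−1)/(d+1) on the non-exchangeability of d-copulas is best possible. -/

import Mathlib

/-!
If `X` is uniform on `[0,1)`, every `fract (X + σ i)` is again uniform, so for any shifts `σ` the
joint distribution function of `(fract (X + σ i))ᵢ` is a copula.

Cut the circle into `d + 1` arcs of length `1/(d+1)` and shift each odd coordinate `i` by
`(d - i)/(d+1)`, the even ones not at all. At the point `u` with `u i = (d-1)/(d+1)` for even `i`,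
`u (d-1) = d/(d+1)` if `d - 1` is odd and `u i = 1` otherwise, the event is simply
`X ≤ (d-1)/(d+1)`. Once `u` is rotated by one step, each odd coordinate `2j+1` forbids the arc
`(2j/(d+1), (2j+2)/(d+1))` and coordinate `0` forbids `X > 2⌊d/2⌋/(d+1)`; these arcs cover `[0,1)`
up to finitely many points, so the copula vanishes there.
-/

/-- A `d`-copula: a function `C : [0,1]^d → ℝ` (defined on all of `(Fin d → ℝ)`,
with the copula conditions imposed on `[0,1]^d`) that is grounded, has uniform
one-dimensional margins, and is `d`-increasing. -/
def IsCopula (d : ℕ) (C : (Fin d → ℝ) → ℝ) : Prop :=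
  (∀ u : Fin d → ℝ, (∀ i, u i ∈ Set.Icc (0:ℝ) 1) → (∃ i, u i = 0) → C u = 0) ∧
  (∀ u : Fin d → ℝ, (∀ i, u i ∈ Set.Icc (0:ℝ) 1) →
    ∀ i : Fin d, (∀ j, j ≠ i → u j = 1) → C u = u i) ∧
  (∀ a b : Fin d → ℝ, (∀ i, a i ∈ Set.Icc (0:ℝ) 1) → (∀ i, b i ∈ Set.Icc (0:ℝ) 1) →
    (∀ i, a i ≤ b i) →
    0 ≤ ∑ S : Finset (Fin d),
        (-1 : ℝ) ^ (d - S.card) * C (fun k => if k ∈ S then b k else a k))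

open MeasureTheory Set

noncomputable section

theorem Fintype.prod_sub_eq_sum_ite {ι R : Type*} [Fintype ι] [DecidableEq ι] [CommRing R]
    (f g : ι → R) :
    ∏ i, (f i - g i) = ∑ S : Finset ι, (-1) ^ Sᶜ.card * ∏ i, (if i ∈ S then f i else g i) := by
  simp_rw [sub_eq_add_neg, Fintype.prod_add, Finset.prod_neg]
  refine Finset.sum_congr rfl fun S _ => ?_
  rw [Finset.prod_ite, Finset.filter_mem_eq_of_subset S.subset_univ, Finset.filter_not,
    Finset.filter_mem_eq_of_subset S.subset_univ, ← Finset.compl_eq_univ_sdiff]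
  ring

def jointCDF {Ω : Type*} [MeasurableSpace Ω] (μ : Measure Ω) {d : ℕ} (X : Fin d → Ω → ℝ)
    (u : Fin d → ℝ) : ℝ :=
  μ.real {ω | ∀ i, X i ω ≤ u i}

section JointCDF

variable {Ω : Type*} {d : ℕ} {X : Fin d → Ω → ℝ}

lemma prod_ite_le_eq_indicator (u : Fin d → ℝ) (ω : Ω) :
    ∏ i, (if X i ω ≤ u i then (1 : ℝ) else 0) = {ω | ∀ i, X i ω ≤ u i}.indicator 1 ω := by
  simp [Set.indicator_apply, Fintype.prod_boole]

variable [MeasurableSpace Ω] {μ : Measure Ω}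

lemma measurableSet_forall_le (hX : ∀ i, Measurable (X i)) (u : Fin d → ℝ) :
    MeasurableSet {ω | ∀ i, X i ω ≤ u i} := by
  rw [ofPred_forall]
  exact MeasurableSet.iInter fun i => measurableSet_le (hX i) measurable_const

lemma jointCDF_eq_integral (hX : ∀ i, Measurable (X i)) (u : Fin d → ℝ) :
    jointCDF μ X u = ∫ ω, ∏ i, (if X i ω ≤ u i then (1 : ℝ) else 0) ∂μ := by
  simp_rw [prod_ite_le_eq_indicator, integral_indicator_one (measurableSet_forall_le hX u)]
  rfl

lemma integrable_prod_ite_le [IsFiniteMeasure μ] (hX : ∀ i, Measurable (X i))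
    (u : Fin d → ℝ) : Integrable (fun ω => ∏ i, if X i ω ≤ u i then (1 : ℝ) else 0) μ := by
  simp_rw [prod_ite_le_eq_indicator]
  exact (integrable_const 1).indicator (measurableSet_forall_le hX u)

theorem jointCDF_alternating_sum_nonneg [IsFiniteMeasure μ] (hX : ∀ i, Measurable (X i))
    {a b : Fin d → ℝ} (hab : ∀ i, a i ≤ b i) :
    0 ≤ ∑ S : Finset (Fin d),
      (-1 : ℝ) ^ (d - S.card) * jointCDF μ X (fun k => if k ∈ S then b k else a k) := by
  have hpoint : ∀ ω, ∏ i, ((if X i ω ≤ b i then (1 : ℝ) else 0) - if X i ω ≤ a i then 1 else 0)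
      = ∑ S : Finset (Fin d), (-1 : ℝ) ^ (d - S.card) *
        ∏ i, (if X i ω ≤ (if i ∈ S then b i else a i) then 1 else 0) := by
    intro ω
    rw [Fintype.prod_sub_eq_sum_ite]
    refine Finset.sum_congr rfl fun S _ => ?_
    rw [Finset.card_compl, Fintype.card_fin]
    congr 1
    exact Finset.prod_congr rfl fun i _ => by split_ifs <;> rfl
  calc (0 : ℝ)
      ≤ ∫ ω, ∏ i, ((if X i ω ≤ b i then (1 : ℝ) else 0) - if X i ω ≤ a i then 1 else 0) ∂μ := by
        refine integral_nonneg fun ω => Finset.prod_nonneg fun i _ => ?_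
        have hmono : X i ω ≤ a i → X i ω ≤ b i := fun h => h.trans (hab i)
        split_ifs <;> simp_all
    _ = _ := by
        simp_rw [hpoint, jointCDF_eq_integral hX, ← integral_const_mul]
        exact integral_finsetSum _ fun S _ => (integrable_prod_ite_le hX _).const_mul _

theorem isCopula_jointCDF [IsProbabilityMeasure μ] (hX : ∀ i, Measurable (X i))
    (hunif : ∀ i, ∀ t ∈ Icc (0 : ℝ) 1, μ.real {ω | X i ω ≤ t} = t) :
    IsCopula d (jointCDF μ X) := by
  refine ⟨fun u _ ⟨i, hi⟩ => ?_, fun u hu i hone => ?_,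
    fun a b _ _ hab => jointCDF_alternating_sum_nonneg hX hab⟩
  · refine le_antisymm ?_ measureReal_nonneg
    calc jointCDF μ X u ≤ μ.real {ω | X i ω ≤ 0} := measureReal_mono fun ω hω => hi ▸ hω i
      _ = 0 := hunif i 0 (left_mem_Icc.2 zero_le_one)
  · have hle : ∀ᵐ ω ∂μ, ∀ j, X j ω ≤ 1 := ae_all_iff.2 fun j => by
      rw [ae_iff_measure_eq (measurableSet_le (hX j) measurable_const).nullMeasurableSet,
        measure_univ, ← ENNReal.toReal_eq_one_iff]
      exact hunif j 1 (right_mem_Icc.2 zero_le_one)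
    rw [← hunif i (u i) (hu i)]
    refine measureReal_congr (Filter.eventuallyEq_set.2 ?_)
    filter_upwards [hle] with ω hω
    exact ⟨fun h => h i, fun h j => if hj : j = i then hj ▸ h else (hone j hj).symm ▸ hω j⟩

end JointCDF

instance : IsProbabilityMeasure (volume.restrict (Ico (0 : ℝ) 1)) := ⟨by simp⟩

lemma measureReal_fract_le {t : ℝ} (ht : t ∈ Icc (0 : ℝ) 1) :
    (volume.restrict (Ico (0 : ℝ) 1)).real {y | Int.fract y ≤ t} = t := by
  have hset : {y | Int.fract y ≤ t} ∩ Ico 0 1 = Icc 0 t \ {1} := by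
    ext y
    simp only [mem_inter_iff, mem_ofPred_eq, mem_Ico, mem_sdiff, mem_Icc, mem_singleton_iff]
    constructor
    · rintro ⟨h, h0, h1⟩
      rw [Int.fract_eq_self.2 ⟨h0, h1⟩] at h
      exact ⟨⟨h0, h⟩, h1.ne⟩
    · rintro ⟨⟨h0, h⟩, h1⟩
      have hy : y < 1 := lt_of_le_of_ne (h.trans ht.2) h1
      rw [Int.fract_eq_self.2 ⟨h0, hy⟩]
      exact ⟨h, h0, hy⟩
  rw [measureReal_restrict_apply (measurableSet_le measurable_fract measurable_const), hset,
    measureReal_sdiff_null (s₂ := {(1 : ℝ)}) (by simp [measureReal_def])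
      (by simp [measure_singleton]), Real.volume_real_Icc_of_le ht.1, sub_zero]

lemma measureReal_fract_add_le (s : ℝ) {t : ℝ} (ht : t ∈ Icc (0 : ℝ) 1) :
    (volume.restrict (Ico (0 : ℝ) 1)).real {x | Int.fract (x + s) ≤ t} = t := by
  let F := {y : ℝ | Int.fract y ≤ t}.indicator (1 : ℝ → ℝ)
  have hF : MeasurableSet {y : ℝ | Int.fract y ≤ t} :=
    measurableSet_le measurable_fract measurable_const
  have hper : Function.Periodic F 1 := fun y => by
    simp only [F, Set.indicator_apply, mem_ofPred_eq, Int.fract_add_one, Pi.one_apply]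
  have hint : ∀ r, (volume.restrict (Ico (0 : ℝ) 1)).real {x | Int.fract (x + r) ≤ t}
      = ∫ x in (0 : ℝ)..1, F (x + r) := fun r => by
    rw [intervalIntegral.integral_of_le zero_le_one, integral_Ioc_eq_integral_Ioo,
      ← integral_Ico_eq_integral_Ioo,
      ← integral_indicator_one (s := {x | Int.fract (x + r) ≤ t})
        (hF.preimage (measurable_add_const r))]
    rfl
  calc _ = ∫ x in (0 : ℝ)..1, F (x + s) := hint s
    _ = ∫ x in (0 : ℝ)..1, F (x + 0) := by
        simp only [intervalIntegral.integral_comp_add_right, zero_add, add_comm 1 s]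
        simpa using hper.intervalIntegral_add_eq s 0
    _ = t := by rw [← hint 0]; simpa using measureReal_fract_le ht

def shiftCopula {d : ℕ} (σ : Fin d → ℝ) : (Fin d → ℝ) → ℝ :=
  jointCDF (volume.restrict (Ico (0 : ℝ) 1)) fun i x => Int.fract (x + σ i)

theorem isCopula_shiftCopula {d : ℕ} (σ : Fin d → ℝ) : IsCopula d (shiftCopula σ) :=
  isCopula_jointCDF (fun i => (measurable_add_const (σ i)).fract)
    fun i _ ht => measureReal_fract_add_le (σ i) ht

lemma shiftCopula_apply {d : ℕ} (σ u : Fin d → ℝ) :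
    shiftCopula σ u = volume.real ({x | ∀ i, Int.fract (x + σ i) ≤ u i} ∩ Ico 0 1) :=
  measureReal_restrict_apply <|
    measurableSet_forall_le (fun i => (measurable_add_const (σ i)).fract) u

lemma le_sub_or_one_sub_le_of_fract_add_le {x s t : ℝ} (hx : 0 ≤ x) (hs : 0 ≤ s)
    (h : Int.fract (x + s) ≤ t) : x ≤ t - s ∨ 1 - s ≤ x := by
  rcases lt_or_ge (x + s) 1 with hlt | hge
  · rw [Int.fract_eq_self.2 ⟨add_nonneg hx hs, hlt⟩] at h
    exact Or.inl (by linarith)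
  · exact Or.inr (by linarith)

lemma exists_nat_eq_two_mul_div_of_forall_le_or_le {x D : ℝ} {m : ℕ} (h0 : 0 ≤ x)
    (hm : x ≤ 2 * m / D) (h : ∀ j < m, x ≤ 2 * j / D ∨ (2 * j + 2) / D ≤ x) :
    ∃ j : ℕ, x = 2 * j / D := by
  induction m with
  | zero => exact ⟨0, le_antisymm (by simpa using hm) (by simpa using h0)⟩
  | succ m ih =>
    rcases h m m.lt_succ_self with hle | hge
    · exact ih hle fun j hj => h j (hj.trans m.lt_succ_self)
    · refine ⟨m + 1, le_antisymm hm ?_⟩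
      calc 2 * ((m + 1 : ℕ) : ℝ) / D = (2 * m + 2) / D := by push_cast; ring
        _ ≤ x := hge

def extremalShift (d : ℕ) (i : Fin d) : ℝ :=
  if Odd (i : ℕ) then ((d : ℝ) - i) / (d + 1) else 0

def extremalPoint (d : ℕ) (i : Fin d) : ℝ :=
  if Odd (i : ℕ) then (if (i : ℕ) + 1 = d then (d : ℝ) / (d + 1) else 1)
  else ((d : ℝ) - 1) / (d + 1)

lemma extremalPoint_mem_Icc {d : ℕ} (hd : 0 < d) (i : Fin d) :
    extremalPoint d i ∈ Icc (0 : ℝ) 1 := by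
  have hd' : (1 : ℝ) ≤ d := by exact_mod_cast hd
  unfold extremalPoint
  split_ifs
  · exact ⟨by positivity, (div_le_one (by positivity)).2 (by linarith)⟩
  · exact right_mem_Icc.2 zero_le_one
  · exact ⟨div_nonneg (by linarith) (by positivity), (div_le_one (by positivity)).2 (by linarith)⟩

lemma extremalPoint_finRotate_symm_of_odd {d : ℕ} {i : Fin d} (hi : Odd (i : ℕ)) :
    extremalPoint d ((finRotate d).symm i) = ((d : ℝ) - 1) / (d + 1) := by
  have := i.neZero
  rw [extremalPoint, if_neg (by
    rw [coe_finRotate_symm_of_ne_zero (Fin.ne_of_val_ne hi.pos.ne'), Nat.odd_iff]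
    rw [Nat.odd_iff] at hi
    omega)]

lemma extremalPoint_finRotate_symm_zero {d : ℕ} (hd : 0 < d) :
    extremalPoint d ((finRotate d).symm ⟨0, hd⟩) = 2 * (d / 2 : ℕ) / (d + 1) := by
  have hval : (((finRotate d).symm ⟨0, hd⟩ : Fin d) : ℕ) = d - 1 := by
    cases d with
    | zero => omega
    | succ n => simp [Fin.coe_neg_one]
  rw [extremalPoint, hval]
  rcases Nat.even_or_odd' d with ⟨m, rfl | rfl⟩
  · have hm : 0 < m := by omega
    rw [if_pos (by rw [Nat.odd_iff]; omega), if_pos (by omega), Nat.mul_div_cancel_left m two_pos]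
    push_cast; ring
  · rw [if_neg (by rw [Nat.odd_iff]; omega), show (2 * m + 1) / 2 = m by omega]
    push_cast; ring

lemma shiftCopula_extremalPoint {d : ℕ} (hd : 0 < d) :
    shiftCopula (extremalShift d) (extremalPoint d) = ((d : ℝ) - 1) / (d + 1) := by
  have hD : (0 : ℝ) < d + 1 := by positivity
  have hd' : (1 : ℝ) ≤ d := by exact_mod_cast hd
  have hlt : ((d : ℝ) - 1) / (d + 1) < 1 := (div_lt_one hD).2 (by linarith)
  have hset : {x | ∀ i, Int.fract (x + extremalShift d i) ≤ extremalPoint d i} ∩ Ico 0 1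
      = Icc 0 (((d : ℝ) - 1) / (d + 1)) := by
    ext x
    simp only [mem_inter_iff, mem_ofPred_eq, mem_Ico, mem_Icc]
    constructor
    · rintro ⟨h, h0, h1⟩
      have h' := h ⟨0, hd⟩
      simp only [extremalShift, extremalPoint, Nat.not_odd_zero, if_false, add_zero,
        Int.fract_eq_self.2 ⟨h0, h1⟩] at h'
      exact ⟨h0, h'⟩
    · rintro ⟨h0, hx⟩
      refine ⟨fun i => ?_, h0, hx.trans_lt hlt⟩
      unfold extremalShift extremalPoint
      split_ifs with hodd hlast
      · have hi : (d : ℝ) - i = 1 := by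
          have : (i : ℝ) + 1 = d := by exact_mod_cast hlast
          linarith
        have hle : x + 1 / (d + 1) ≤ (d : ℝ) / (d + 1) := by
          calc x + 1 / (d + 1) ≤ ((d : ℝ) - 1) / (d + 1) + 1 / (d + 1) := by gcongr
            _ = d / (d + 1) := by ring
        rwa [hi, Int.fract_eq_self.2
          ⟨by positivity, hle.trans_lt ((div_lt_one hD).2 (by linarith))⟩]
      · exact (Int.fract_lt_one _).le
      · rwa [add_zero, Int.fract_eq_self.2 ⟨h0, hx.trans_lt hlt⟩]
  rw [shiftCopula_apply, hset, Real.volume_real_Icc_of_le (div_nonneg (by linarith) hD.le),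
    sub_zero]

lemma shiftCopula_extremalPoint_comp_finRotate_symm {d : ℕ} (hd : 0 < d) :
    shiftCopula (extremalShift d) (extremalPoint d ∘ (finRotate d).symm) = 0 := by
  have hD : (0 : ℝ) < d + 1 := by positivity
  have hsub : {x | ∀ i, Int.fract (x + extremalShift d i) ≤
      (extremalPoint d ∘ (finRotate d).symm) i} ∩ Ico 0 1 ⊆
        range fun j : ℕ => 2 * j / ((d : ℝ) + 1) := by
    rintro x ⟨h, h0, h1⟩
    have htop : x ≤ 2 * (d / 2 : ℕ) / (d + 1) := by
      have h' := h ⟨0, hd⟩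
      rwa [Function.comp_apply, extremalPoint_finRotate_symm_zero hd, extremalShift,
        if_neg Nat.not_odd_zero, add_zero, Int.fract_eq_self.2 ⟨h0, h1⟩] at h'
    have hgap : ∀ j < d / 2, x ≤ 2 * j / (d + 1) ∨ (2 * j + 2) / (d + 1) ≤ x := by
      intro j hj
      have h' := h ⟨2 * j + 1, by omega⟩
      have hodd : Odd (2 * j + 1) := odd_two_mul_add_one j
      rw [Function.comp_apply, extremalPoint_finRotate_symm_of_odd hodd, extremalShift,
        if_pos hodd] at h'
      have hσ : (0 : ℝ) ≤ ((d : ℝ) - ((2 * j + 1 : ℕ) : ℝ)) / (d + 1) :=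
        div_nonneg (sub_nonneg.2 (by exact_mod_cast (by omega : 2 * j + 1 ≤ d))) hD.le
      convert le_sub_or_one_sub_le_of_fract_add_le h0 hσ h' using 2 <;>
        field_simp <;> push_cast <;> ring
    obtain ⟨j, hj⟩ := exists_nat_eq_two_mul_div_of_forall_le_or_le h0 htop hgap
    exact ⟨j, hj.symm⟩
  rw [shiftCopula_apply, measureReal_def,
    measure_mono_null hsub ((countable_range _).measure_zero _), ENNReal.toReal_zero]

theorem bound_is_sharp (d : ℕ) (hd : 2 ≤ d) :
    ∃ (C : (Fin d → ℝ) → ℝ) (π : Equiv.Perm (Fin d)) (u : Fin d → ℝ),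
      IsCopula d C ∧ (∀ i, u i ∈ Set.Icc (0:ℝ) 1) ∧
      |C u - C (u ∘ π)| = ((d : ℝ) - 1) / ((d : ℝ) + 1) := by
  have hd0 : 0 < d := by omega
  refine ⟨shiftCopula (extremalShift d), (finRotate d).symm, extremalPoint d,
    isCopula_shiftCopula _, extremalPoint_mem_Icc hd0, ?_⟩
  rw [shiftCopula_extremalPoint hd0, shiftCopula_extremalPoint_comp_finRotate_symm hd0, sub_zero,
    abs_of_nonneg]
  exact div_nonneg (sub_nonneg.2 (by exact_mod_cast hd0)) (by positivity)

end
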